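/- Let D ≥ 2, let p ∈ ℤ[x₁,x₂,t₂,t₃] be a polynomial not involving x₂ which is monic of degree D as a polynomial in x₁, and let p′ be the image of p under the automorphism of ℤ[x₁,x₂,t₂,t₃] exchanging x₁ and x₂ and fixing t₂, t₃. Let σ : ℤ[β₁,β₂,t₂,t₃] → ℤ[x₁,x₂,t₂,t₃] be the ring homomorphism with β₁ ↦ x₁+x₂, β₂ ↦ x₁·x₂, t₂ ↦ t₂, t₃ ↦ t₃, and let Ψ : ℤ[β₁,β₂,γ,t₂,t₃] → ℤ[x₁,x₂,t₂,t₃] be its extension with γ ↦ 0. Let J₁, J₂ ∈ ℤ[β₁,β₂,t₂,t₃] satisfy σ(J₁) = p + p′ and σ(J₂) = x₁·p + x₂·p′. Suppose θ, θ₁, θ₂ ∈ ℤ[β₁,β₂,γ,t₂,t₃] and θ₃, θ₄ ∈ ℤ[β₁,β₂,t₂,t₃] are such that σ(θ₃) and σ(θ₄) have total degree strictly less than D and 2θ = γ·θ₁ + 2t₂t₃(t₂+t₃)·θ₂ + J₁·θ₃ + J₂·θ₄ holds in ℤ[β₁,β₂,γ,t₂,t₃]. Then every coefficient of θ₁ is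 an even integer, and every coefficient of θ₃ and of θ₄ is an even integer. -/
import Mathlib


open MvPolynomial

/-- The inclusion `ℤ[t₂,t₃] → ℤ[x₁,x₂,t₂,t₃]`; in `ℤ[x₁,x₂,t₂,t₃] = MvPolynomial (Fin 4) ℤ`
the variables are `x₁ = X 0`, `x₂ = X 1`, `t₂ = X 2`, `t₃ = X 3`. -/
noncomputable def coeffEmb : MvPolynomial (Fin 2) ℤ →+* MvPolynomial (Fin 4) ℤ :=
  (rename (fun i : Fin 2 => i.succ.succ) :
    MvPolynomial (Fin 2) ℤ →ₐ[ℤ] MvPolynomial (Fin 4) ℤ).toRingHom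

/-- `σ : ℤ[β₁,β₂,t₂,t₃] → ℤ[x₁,x₂,t₂,t₃]`, `β₁ ↦ x₁+x₂`, `β₂ ↦ x₁·x₂`, `t₂ ↦ t₂`,
`t₃ ↦ t₃`.  In the source, `β₁ = X 0`, `β₂ = X 1`, `t₂ = X 2`, `t₃ = X 3`. -/
noncomputable def σhom : MvPolynomial (Fin 4) ℤ →+* MvPolynomial (Fin 4) ℤ :=
  (aeval ![X 0 + X 1, X 0 * X 1, X 2, X 3] :
    MvPolynomial (Fin 4) ℤ →ₐ[ℤ] MvPolynomial (Fin 4) ℤ).toRingHom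

/-- The inclusion `ℤ[β₁,β₂,t₂,t₃] → ℤ[β₁,β₂,γ,t₂,t₃]`; in
`ℤ[β₁,β₂,γ,t₂,t₃] = MvPolynomial (Fin 5) ℤ` the variables are `β₁ = X 0`, `β₂ = X 1`,
`γ = X 2`, `t₂ = X 3`, `t₃ = X 4`. -/
noncomputable def ιhom : MvPolynomial (Fin 4) ℤ →+* MvPolynomial (Fin 5) ℤ :=
  (rename (![0, 1, 3, 4] : Fin 4 → Fin 5) :
    MvPolynomial (Fin 4) ℤ →ₐ[ℤ] MvPolynomial (Fin 5) ℤ).toRingHom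

noncomputable section Aux13

namespace Aux13

/-- Reduction of coefficients modulo 2. -/
def mm (n : ℕ) : MvPolynomial (Fin n) ℤ →+* MvPolynomial (Fin n) (ZMod 2) :=
  MvPolynomial.map (Int.castRingHom (ZMod 2))

lemma mmX (n : ℕ) (i : Fin n) : mm n (X i) = X i := by simp [mm]

lemma evenIff {n : ℕ} (f : MvPolynomial (Fin n) ℤ) :
    (∀ m, Even (coeff m f)) ↔ mm n f = 0 := by
  have key : ∀ z : ℤ, Even z ↔ (Int.castRingHom (ZMod 2)) z = 0 := by
    intro z
    rw [even_iff_two_dvd]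
    show (2 : ℤ) ∣ z ↔ ((z : ZMod 2) = 0)
    exact_mod_cast (ZMod.intCast_zmod_eq_zero_iff_dvd z 2).symm
  constructor
  · intro h
    ext m
    rw [mm, coeff_map, coeff_zero]
    exact (key _).mp (h m)
  · intro h m
    have : coeff m (mm n f) = 0 := by rw [h]; simp
    rw [mm, coeff_map] at this
    exact (key _).mpr this

lemma degreeOf_rename_eq_zero {n m : ℕ} (g : Fin n → Fin m) (hg : Function.Injective g)
    (i : Fin m) (hi : ∀ j, g j ≠ i) (h : MvPolynomial (Fin n) (ZMod 2)) :
    degreeOf i (rename g h) = 0 := by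
  classical
  rw [degreeOf_eq_sup]
  apply Nat.le_antisymm _ (Nat.zero_le _)
  apply Finset.sup_le
  intro mo hmo
  rw [support_rename_of_injective hg, Finset.mem_image] at hmo
  obtain ⟨m', _, rfl⟩ := hmo
  rw [Finsupp.mapDomain_notin_range]
  rintro ⟨j, hj⟩
  exact hi j hj

/-- The mod 2 version of `σhom`. -/
def σ2 : MvPolynomial (Fin 4) (ZMod 2) →+* MvPolynomial (Fin 4) (ZMod 2) :=
  (aeval ![X 0 + X 1, X 0 * X 1, X 2, X 3] :
    MvPolynomial (Fin 4) (ZMod 2) →ₐ[ZMod 2] MvPolynomial (Fin 4) (ZMod 2)).toRingHom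

/-- The mod 2 version of `ιhom`. -/
def ι2 : MvPolynomial (Fin 4) (ZMod 2) →+* MvPolynomial (Fin 5) (ZMod 2) :=
  (rename (![0, 1, 3, 4] : Fin 4 → Fin 5) :
    MvPolynomial (Fin 4) (ZMod 2) →ₐ[ZMod 2] MvPolynomial (Fin 5) (ZMod 2)).toRingHom

/-- A retraction of `ι2`, substituting `γ = 0`. -/
def ε5 : MvPolynomial (Fin 5) (ZMod 2) →+* MvPolynomial (Fin 4) (ZMod 2) :=
  (aeval ![X 0, X 1, 0, X 2, X 3] :
    MvPolynomial (Fin 5) (ZMod 2) →ₐ[ZMod 2] MvPolynomial (Fin 4) (ZMod 2)).toRingHom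

/-- Substituting `0` for the second variable. -/
def e1 : MvPolynomial (Fin 4) (ZMod 2) →+* MvPolynomial (Fin 4) (ZMod 2) :=
  (aeval ![X 0, 0, X 2, X 3] :
    MvPolynomial (Fin 4) (ZMod 2) →ₐ[ZMod 2] MvPolynomial (Fin 4) (ZMod 2)).toRingHom

/-- The coefficient embedding into three variables, mod 2. -/
def h23 : MvPolynomial (Fin 2) ℤ →+* MvPolynomial (Fin 3) (ZMod 2) :=
  (MvPolynomial.map (Int.castRingHom (ZMod 2))).comp
    (rename (fun i : Fin 2 => i.succ) :
      MvPolynomial (Fin 2) ℤ →ₐ[ℤ] MvPolynomial (Fin 3) ℤ).toRingHom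

lemma ε5_ι2 (f : MvPolynomial (Fin 4) (ZMod 2)) : ε5 (ι2 f) = f := by
  have : ε5.comp ι2 = RingHom.id _ := by
    apply ringHom_ext
    · intro r; simp [ε5, ι2]
    · intro i; fin_cases i <;> simp [ε5, ι2]
  exact RingHom.congr_fun this f

lemma e1_σ2 (f : MvPolynomial (Fin 4) (ZMod 2)) : e1 (σ2 f) = e1 f := by
  have : e1.comp σ2 = e1 := by
    apply ringHom_ext
    · intro r; simp [e1, σ2]
    · intro i; fin_cases i <;> simp [e1, σ2]
  exact RingHom.congr_fun this f

lemma X1_dvd_sub_e1 (f : MvPolynomial (Fin 4) (ZMod 2)) :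
    (X 1 : MvPolynomial (Fin 4) (ZMod 2)) ∣ f - e1 f := by
  induction f using MvPolynomial.induction_on with
  | C a => simp [e1]
  | add p q hp hq =>
      have : p + q - e1 (p + q) = (p - e1 p) + (q - e1 q) := by rw [map_add]; ring
      rw [this]; exact dvd_add hp hq
  | mul_X p i hp =>
      rw [map_mul]
      fin_cases i
      · show X 1 ∣ p * X 0 - e1 p * e1 (X 0)
        have h' : e1 (X (0 : Fin 4)) = X 0 := by simp [e1]
        rw [h', show p * X 0 - e1 p * X 0 = (p - e1 p) * X 0 by ring]
        exact hp.mul_right _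
      · show X 1 ∣ p * X 1 - e1 p * e1 (X 1)
        have h' : e1 (X (1 : Fin 4)) = 0 := by simp [e1]
        rw [h', mul_zero, sub_zero]
        exact Dvd.intro_left p rfl
      · show X 1 ∣ p * X 2 - e1 p * e1 (X 2)
        have h' : e1 (X (2 : Fin 4)) = X 2 := by simp [e1]
        rw [h', show p * X 2 - e1 p * X 2 = (p - e1 p) * X 2 by ring]
        exact hp.mul_right _
      · show X 1 ∣ p * X 3 - e1 p * e1 (X 3)
        have h' : e1 (X (3 : Fin 4)) = X 3 := by simp [e1]
        rw [h', show p * X 3 - e1 p * X 3 = (p - e1 p) * X 3 by ring]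
        exact hp.mul_right _

lemma σ2_inj (f : MvPolynomial (Fin 4) (ZMod 2)) (hf : σ2 f = 0) : f = 0 := by
  suffices H : ∀ n (f : MvPolynomial (Fin 4) (ZMod 2)), degreeOf 1 f ≤ n → σ2 f = 0 → f = 0 from
    H _ f le_rfl hf
  intro n
  induction n with
  | zero =>
      intro f hdeg hf
      have he : e1 f = 0 := by rw [← e1_σ2, hf, map_zero]
      obtain ⟨g, hg⟩ : (X 1 : MvPolynomial (Fin 4) (ZMod 2)) ∣ f := by
        simpa [he] using X1_dvd_sub_e1 f
      by_cases hg0 : g = 0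
      · rw [hg, hg0, mul_zero]
      · exfalso
        have := (degreeOf_mul_X_eq_degreeOf_add_one_iff 1 g).mpr hg0
        rw [hg, mul_comm] at hdeg
        omega
  | succ n IH =>
      intro f hdeg hf
      have he : e1 f = 0 := by rw [← e1_σ2, hf, map_zero]
      obtain ⟨g, hg⟩ : (X 1 : MvPolynomial (Fin 4) (ZMod 2)) ∣ f := by
        simpa [he] using X1_dvd_sub_e1 f
      by_cases hg0 : g = 0
      · rw [hg, hg0, mul_zero]
      · have hsg : σ2 g = 0 := by
          rw [hg, map_mul] at hf
          have hX1 : σ2 (X (1 : Fin 4)) = X 0 * X 1 := by simp [σ2]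
          rw [hX1] at hf
          rcases mul_eq_zero.mp hf with h | h
          · exact absurd h (by simp [X_ne_zero, mul_eq_zero])
          · exact h
        have hdg : degreeOf 1 g ≤ n := by
          have := (degreeOf_mul_X_eq_degreeOf_add_one_iff 1 g).mpr hg0
          rw [hg, mul_comm] at hdeg
          omega
        rw [hg, IH g hdg hsg, mul_zero]

lemma totalDegree_mm_le {n : ℕ} (f : MvPolynomial (Fin n) ℤ) :
    (mm n f).totalDegree ≤ f.totalDegree := by
  simp only [totalDegree]
  exact Finset.sup_mono (support_map_subset _ _)

lemma mσ_comm (f : MvPolynomial (Fin 4) ℤ) : mm 4 (σhom f) = σ2 (mm 4 f) := by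
  have : (mm 4).comp σhom = σ2.comp (mm 4) := by
    apply ringHom_ext
    · intro r; simp [mm, σhom, σ2]
    · intro i; fin_cases i <;> simp [mm, σhom, σ2]
  exact RingHom.congr_fun this f

lemma mι_comm (f : MvPolynomial (Fin 4) ℤ) : mm 5 (ιhom f) = ι2 (mm 4 f) := by
  simp [mm, ιhom, ι2, map_rename]

lemma P2_eq (q : Polynomial (MvPolynomial (Fin 2) ℤ)) :
    mm 4 (Polynomial.eval₂ coeffEmb (X 0) q) =
      rename (![0, 2, 3] : Fin 3 → Fin 4) (Polynomial.eval₂ h23 (X 0) q) := by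
  calc mm 4 (Polynomial.eval₂ coeffEmb (X 0) q)
      = Polynomial.eval₂ ((mm 4).comp coeffEmb) (mm 4 (X 0)) q :=
        Polynomial.hom_eval₂ q coeffEmb (mm 4) (X 0)
    _ = Polynomial.eval₂ (((rename (![0, 2, 3] : Fin 3 → Fin 4) :
          MvPolynomial (Fin 3) (ZMod 2) →ₐ[ZMod 2] MvPolynomial (Fin 4) (ZMod 2)).toRingHom).comp h23)
        ((rename (![0, 2, 3] : Fin 3 → Fin 4) :
          MvPolynomial (Fin 3) (ZMod 2) →ₐ[ZMod 2] MvPolynomial (Fin 4) (ZMod 2)).toRingHom (X 0)) q := by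
        congr 1
        · apply ringHom_ext
          · intro r; simp [mm, coeffEmb, h23]
          · intro i
            have hs1 : Fin.succ (1 : Fin 3) = (2 : Fin 4) := by decide
            have hs2 : Fin.succ (2 : Fin 3) = (3 : Fin 4) := by decide
            fin_cases i <;> simp [mm, coeffEmb, h23, hs1, hs2]
        · simp [mm]
    _ = rename (![0, 2, 3] : Fin 3 → Fin 4) (Polynomial.eval₂ h23 (X 0) q) :=
        (Polynomial.hom_eval₂ q h23 _ (X 0)).symm

lemma deg1_P2 (q : Polynomial (MvPolynomial (Fin 2) ℤ)) :
    degreeOf 1 (mm 4 (Polynomial.eval₂ coeffEmb (X 0) q)) = 0 := by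
  rw [P2_eq]
  exact degreeOf_rename_eq_zero _ (by decide) _ (by decide) _

lemma monic_P2 (q : Polynomial (MvPolynomial (Fin 2) ℤ)) (hq : q.Monic) :
    (finSuccEquiv (ZMod 2) 3 (mm 4 (Polynomial.eval₂ coeffEmb (X 0) q))).Monic ∧
    (finSuccEquiv (ZMod 2) 3 (mm 4 (Polynomial.eval₂ coeffEmb (X 0) q))).natDegree
      = q.natDegree := by
  have key : finSuccEquiv (ZMod 2) 3 (mm 4 (Polynomial.eval₂ coeffEmb (X 0) q))
      = q.map h23 := by
    rw [Polynomial.hom_eval₂]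
    have : ((finSuccEquiv (ZMod 2) 3 :
        MvPolynomial (Fin 4) (ZMod 2) ≃ₐ[ZMod 2] _).toAlgHom.toRingHom)
          (Polynomial.eval₂ ((mm 4).comp coeffEmb) (mm 4 (X 0)) q) = q.map h23 := by
      rw [Polynomial.hom_eval₂]
      rw [Polynomial.map]
      congr 1
      · apply ringHom_ext
        · intro r
          simp [mm, coeffEmb, h23]
        · intro i
          have e2 : finSuccEquiv (ZMod 2) 3 (X (2 : Fin 4)) = Polynomial.C (X 1) :=
            finSuccEquiv_X_succ (j := (1 : Fin 3))
          have e3 : finSuccEquiv (ZMod 2) 3 (X (3 : Fin 4)) = Polynomial.C (X 2) :=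
            finSuccEquiv_X_succ (j := (2 : Fin 3))
          have hs1 : Fin.succ (1 : Fin 3) = (2 : Fin 4) := by decide
          have hs2 : Fin.succ (2 : Fin 3) = (3 : Fin 4) := by decide
          fin_cases i <;>
            simp [mm, coeffEmb, h23, e2, e3, hs1, hs2]
      · have : mm 4 (X 0 : MvPolynomial (Fin 4) ℤ) = X 0 := by simp [mm]
        rw [this]
        exact finSuccEquiv_X_zero
    exact this
  refine ⟨?_, ?_⟩
  · rw [key]; exact hq.map h23
  · rw [key]; exact hq.natDegree_map h23

end Aux13

end Aux13

open Aux13 in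
/-- Let `D ≥ 2`, let `p ∈ ℤ[x₁,x₂,t₂,t₃]` not involve `x₂` and be monic of degree `D`
in `x₁`, and let `p′` be its image under the swap of `x₁` and `x₂`.  Let
`J₁, J₂ ∈ ℤ[β₁,β₂,t₂,t₃]` with `σ(J₁) = p + p′` and `σ(J₂) = x₁·p + x₂·p′`.  Suppose
`θ, θ₁, θ₂ ∈ ℤ[β₁,β₂,γ,t₂,t₃]` and `θ₃, θ₄ ∈ ℤ[β₁,β₂,t₂,t₃]` satisfy that `σ(θ₃)` and
`σ(θ₄)` have total degree `< D` and `2θ = γθ₁ + 2t₂t₃(t₂+t₃)θ₂ + J₁θ₃ + J₂θ₄` holds in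
`ℤ[β₁,β₂,γ,t₂,t₃]`.  Then every coefficient of `θ₁` is even, and every coefficient of
`θ₃` and of `θ₄` is even. -/
theorem stmt_13 (D : ℕ) (hD : 2 ≤ D)
    (q : Polynomial (MvPolynomial (Fin 2) ℤ)) (hq : q.Monic) (hqD : q.natDegree = D)
    (p p' : MvPolynomial (Fin 4) ℤ)
    (hp : p = Polynomial.eval₂ coeffEmb (X 0) q)
    (hp' : p' = rename (Equiv.swap (0 : Fin 4) 1) p)
    (J₁ J₂ θ₃ θ₄ : MvPolynomial (Fin 4) ℤ)
    (hJ₁ : σhom J₁ = p + p')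
    (hJ₂ : σhom J₂ = X 0 * p + X 1 * p')
    (θ θ₁ θ₂ : MvPolynomial (Fin 5) ℤ)
    (h₃ : (σhom θ₃).totalDegree < D) (h₄ : (σhom θ₄).totalDegree < D)
    (heq : 2 * θ = X 2 * θ₁ + 2 * (X 3 * X 4 * (X 3 + X 4)) * θ₂
      + ιhom J₁ * ιhom θ₃ + ιhom J₂ * ιhom θ₄) :
    (∀ m, Even (coeff m θ₁)) ∧ (∀ m, Even (coeff m θ₃)) ∧ (∀ m, Even (coeff m θ₄)) := by
  classical
  subst hp'
  -- basic mod 2 facts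
  have h2five : (2 : MvPolynomial (Fin 5) (ZMod 2)) = 0 := by
    rw [← map_ofNat (C : ZMod 2 →+* MvPolynomial (Fin 5) (ZMod 2)) 2,
      show ((2 : ZMod 2)) = 0 from rfl, map_zero]
  -- the mod 2 equation in five variables
  have H5 : (0 : MvPolynomial (Fin 5) (ZMod 2)) =
      X 2 * mm 5 θ₁ + ι2 (mm 4 J₁) * ι2 (mm 4 θ₃) + ι2 (mm 4 J₂) * ι2 (mm 4 θ₄) := by
    have h := congrArg (mm 5) heq
    simp only [map_mul, map_add, map_ofNat, mmX, mι_comm, h2five, zero_mul, mul_zero,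
      zero_add, add_zero] at h
    exact h
  -- substituting γ = 0
  have HE : (0 : MvPolynomial (Fin 4) (ZMod 2)) = mm 4 J₁ * mm 4 θ₃ + mm 4 J₂ * mm 4 θ₄ := by
    have h := congrArg ε5 H5
    have hX2 : ε5 (X (2 : Fin 5)) = 0 := by simp [ε5]
    simp only [map_zero, map_add, map_mul, ε5_ι2, hX2, zero_mul, zero_add] at h
    exact h
  -- applying σ₂
  have HS := congrArg σ2 HE
  rw [map_zero, map_add, map_mul, map_mul, ← mσ_comm J₁, ← mσ_comm J₂, hJ₁, hJ₂] at HS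
  simp only [map_add, map_mul, mmX] at HS
  set P2 : MvPolynomial (Fin 4) (ZMod 2) := mm 4 p with hP2
  set P2' : MvPolynomial (Fin 4) (ZMod 2) := mm 4 (rename (Equiv.swap (0 : Fin 4) 1) p) with hP2'
  set A' : MvPolynomial (Fin 4) (ZMod 2) := σ2 (mm 4 θ₃) with hA'
  set B' : MvPolynomial (Fin 4) (ZMod 2) := σ2 (mm 4 θ₄) with hB'
  -- HS : 0 = (P2 + P2') * A' + (X 0 * P2 + X 1 * P2') * B'
  have hkey : P2 * (A' + X 0 * B') + P2' * (A' + X 1 * B') = 0 := by linear_combination -HS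
  -- monicity data for P2
  obtain ⟨hmon, hdeg⟩ := monic_P2 q hq
  rw [hqD] at hdeg
  rw [← hp] at hmon hdeg
  have hP2ne : P2 ≠ 0 := by
    intro h
    exact hmon.ne_zero (by rw [hP2] at h; rw [h, map_zero])
  have hswap : mm 4 (rename (⇑(Equiv.swap (0 : Fin 4) 1)) p)
      = rename (⇑(Equiv.swap (0 : Fin 4) 1)) (mm 4 p) := map_rename _ _ _
  have hP2'ne : P2' ≠ 0 := by
    rw [hP2', hswap]
    intro h
    exact hP2ne (rename_injective _ (Equiv.injective _) (by rw [h, map_zero]))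
  have hdeg1P2 : degreeOf 1 P2 = 0 := by rw [hP2, hp]; exact deg1_P2 q
  have hP2'0 : degreeOf 0 P2' = 0 := by
    rw [hP2', hswap]
    have h01 : (Equiv.swap (0 : Fin 4) 1) 1 = 0 := Equiv.swap_apply_right 0 1
    calc degreeOf 0 (rename (⇑(Equiv.swap (0 : Fin 4) 1)) (mm 4 p))
        = degreeOf ((Equiv.swap (0 : Fin 4) 1) 1) (rename (⇑(Equiv.swap (0 : Fin 4) 1)) (mm 4 p)) := by
          rw [h01]
      _ = degreeOf 1 (mm 4 p) := degreeOf_rename_of_injective (Equiv.injective _) 1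
      _ = 0 := by rw [← hP2]; exact hdeg1P2
  -- total degree bounds
  have htA' : A'.totalDegree < D := by
    rw [hA', ← mσ_comm]
    exact lt_of_le_of_lt (totalDegree_mm_le _) h₃
  have htB' : B'.totalDegree < D := by
    rw [hB', ← mσ_comm]
    exact lt_of_le_of_lt (totalDegree_mm_le _) h₄
  have hB0 : degreeOf 0 (A' + X 1 * B') < D := by
    have h1 : degreeOf 0 A' < D := lt_of_le_of_lt (degreeOf_le_totalDegree _ _) htA'
    have h2 : degreeOf 0 (X 1 * B' : MvPolynomial (Fin 4) (ZMod 2)) < D := by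
      have := degreeOf_mul_le 0 (X 1 : MvPolynomial (Fin 4) (ZMod 2)) B'
      have hX : degreeOf (0 : Fin 4) (X 1 : MvPolynomial (Fin 4) (ZMod 2)) = 0 := by
        rw [degreeOf_X]; simp
      have hB : degreeOf 0 B' < D := lt_of_le_of_lt (degreeOf_le_totalDegree _ _) htB'
      omega
    exact lt_of_le_of_lt (degreeOf_add_le _ _ _) (max_lt h1 h2)
  -- the degree argument: A = 0
  have hA : A' + X 0 * B' = 0 := by
    by_contra hA0
    have hφA : finSuccEquiv (ZMod 2) 3 (A' + X 0 * B') ≠ 0 := by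
      intro h
      exact hA0 ((finSuccEquiv (ZMod 2) 3).injective (by rw [h, map_zero]))
    have e1' : P2 * (A' + X 0 * B') = -(P2' * (A' + X 1 * B')) := by linear_combination hkey
    have d1 : D ≤ (finSuccEquiv (ZMod 2) 3 (P2 * (A' + X 0 * B'))).natDegree := by
      rw [map_mul, Polynomial.natDegree_mul hmon.ne_zero hφA, hdeg]
      omega
    have d2 : (finSuccEquiv (ZMod 2) 3 (P2' * (A' + X 1 * B'))).natDegree < D := by
      rw [map_mul]
      calc (finSuccEquiv (ZMod 2) 3 P2' * finSuccEquiv (ZMod 2) 3 (A' + X 1 * B')).natDegree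
          ≤ (finSuccEquiv (ZMod 2) 3 P2').natDegree
            + (finSuccEquiv (ZMod 2) 3 (A' + X 1 * B')).natDegree := Polynomial.natDegree_mul_le
        _ = degreeOf 0 P2' + degreeOf 0 (A' + X 1 * B') := by
            rw [natDegree_finSuccEquiv, natDegree_finSuccEquiv]
        _ < D := by rw [hP2'0]; simpa using hB0
    rw [e1', map_neg, Polynomial.natDegree_neg] at d1
    omega
  -- hence B = 0
  have hB : A' + X 1 * B' = 0 := by
    rw [hA, mul_zero, zero_add] at hkey
    exact (mul_eq_zero.mp hkey).resolve_left hP2'ne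
  -- hence B' = 0 and A' = 0
  have hB'0 : B' = 0 := by
    have hX01 : (X 0 - X 1 : MvPolynomial (Fin 4) (ZMod 2)) ≠ 0 := by
      refine sub_ne_zero.mpr fun h => ?_
      exact absurd (X_injective h) (by decide)
    have hz : (X 0 - X 1 : MvPolynomial (Fin 4) (ZMod 2)) * B' = 0 := by
      linear_combination hA - hB
    exact (mul_eq_zero.mp hz).resolve_left hX01
  have hA'0 : A' = 0 := by
    have := hA
    rw [hB'0] at this
    simpa using this
  -- conclude
  have hθ₃0 : mm 4 θ₃ = 0 := σ2_inj _ (by rw [← hA']; exact hA'0)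
  have hθ₄0 : mm 4 θ₄ = 0 := σ2_inj _ (by rw [← hB']; exact hB'0)
  have hθ₁0 : mm 5 θ₁ = 0 := by
    rw [hθ₃0, hθ₄0] at H5
    simp only [map_zero, mul_zero, add_zero] at H5
    exact (mul_eq_zero.mp H5.symm).resolve_left (X_ne_zero _)
  exact ⟨(evenIff θ₁).mpr hθ₁0, (evenIff θ₃).mpr hθ₃0, (evenIff θ₄).mpr hθ₄0⟩
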